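/- The map a ↦ a^{(i)} defined via Macaulay expansions is monotone: if 0 < a ≤ b then a^{(i)} ≤ b^{(i)} for every positive integer i. -/
import Mathlib


/-- The shifted Macaulay operator `a ↦ a^{(i)}`: if `a` has Macaulay expansion
`a = C(a_i, i) + C(a_{i-1}, i-1) + ⋯ + C(a_j, j)` with `a_i > ⋯ > a_j ≥ j ≥ 1`,
then `a^{(i)} = C(a_i, i+1) + C(a_{i-1}, i) + ⋯ + C(a_j, j+1)`. Computed greedily;
by convention `0^{(i)} = 0`. `macaulayShift i a = a^{(i)}`. -/
def macaulayShift : ℕ → ℕ → ℕ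
  | 0, _ => 0
  | (i + 1), a =>
    if a = 0 then 0
    else
      let m := Nat.findGreatest (fun t => Nat.choose t (i + 1) ≤ a) (a + i + 1)
      Nat.choose m (i + 2) + macaulayShift i (a - Nat.choose m (i + 1))


lemma choose_ge_sub (j : ℕ) : ∀ n, j + 1 ≤ n → n - j ≤ Nat.choose n (j + 1) := by
  intro n
  induction n with
  | zero => omega
  | succ n ih =>
    intro h2
    rcases Nat.eq_or_lt_of_le h2 with h | h
    · rw [← h]; simp [Nat.choose_self]
    · have h3 := ih (by omega)
      have h4 : 0 < Nat.choose n j := Nat.choose_pos (by omega)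
      have h5 : Nat.choose (n + 1) (j + 1) = Nat.choose n j + Nat.choose n (j + 1) :=
        Nat.choose_succ_succ n j
      omega

lemma choose_strict (k m n : ℕ) (hmn : m < n) (hk1 : 1 ≤ k) (hkn : k ≤ n) :
    Nat.choose m k < Nat.choose n k := by
  obtain ⟨j, rfl⟩ : ∃ j, k = j + 1 := ⟨k - 1, by omega⟩
  obtain ⟨p, rfl⟩ : ∃ p, n = p + 1 := ⟨n - 1, by omega⟩
  have h1 : Nat.choose m (j + 1) ≤ Nat.choose p (j + 1) := Nat.choose_le_choose _ (by omega)
  have h2 : Nat.choose (p + 1) (j + 1) = Nat.choose p j + Nat.choose p (j + 1) :=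
    Nat.choose_succ_succ p j
  have h3 : 0 < Nat.choose p j := Nat.choose_pos (by omega)
  omega

lemma mspec (i a : ℕ) (ha : 0 < a) :
    i + 1 ≤ Nat.findGreatest (fun t => Nat.choose t (i + 1) ≤ a) (a + i + 1) ∧
    Nat.choose (Nat.findGreatest (fun t => Nat.choose t (i + 1) ≤ a) (a + i + 1)) (i + 1) ≤ a ∧
    a < Nat.choose (Nat.findGreatest (fun t => Nat.choose t (i + 1) ≤ a) (a + i + 1) + 1) (i + 1) := by
  set P := fun t => Nat.choose t (i + 1) ≤ a with hP
  set m := Nat.findGreatest P (a + i + 1) with hm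
  have hpi : P (i + 1) := by simp only [hP, Nat.choose_self]; omega
  have h1 : i + 1 ≤ m := Nat.le_findGreatest (by omega) hpi
  have h2 : P m := Nat.findGreatest_spec (m := i + 1) (by omega) hpi
  refine ⟨h1, h2, ?_⟩
  by_cases hlt : m + 1 ≤ a + i + 1
  · have := Nat.findGreatest_is_greatest (P := P) (n := a + i + 1) (k := m + 1) (by omega) hlt
    simpa [hP] using this
  · have hme : m = a + i + 1 := le_antisymm (Nat.findGreatest_le _) (by omega)
    have hge : (a + i + 1) - i ≤ Nat.choose (a + i + 1) (i + 1) := choose_ge_sub i _ (by omega)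
    have h2' : Nat.choose (a + i + 1) (i + 1) ≤ a := by rw [← hme]; exact h2
    omega

lemma shift_zero (i : ℕ) : macaulayShift i 0 = 0 := by
  cases i <;> simp [macaulayShift]

lemma shift_succ (i a : ℕ) (ha : 0 < a) :
    macaulayShift (i + 1) a =
      Nat.choose (Nat.findGreatest (fun t => Nat.choose t (i + 1) ≤ a) (a + i + 1)) (i + 2)
      + macaulayShift i (a - Nat.choose (Nat.findGreatest (fun t => Nat.choose t (i + 1) ≤ a) (a + i + 1)) (i + 1)) := by
  rw [macaulayShift]
  simp [Nat.pos_iff_ne_zero.mp ha]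

lemma shift_bound : ∀ i n a, a < Nat.choose n (i + 1) → i + 2 ≤ n →
    macaulayShift (i + 1) a < Nat.choose n (i + 2) := by
  intro i
  induction i with
  | zero =>
    intro n a hna hn
    rcases Nat.eq_zero_or_pos a with rfl | ha
    · rw [shift_zero]
      exact Nat.choose_pos (by omega)
    · obtain ⟨h1, h2, h3⟩ := mspec 0 a ha
      rw [shift_succ 0 a ha]
      set m := Nat.findGreatest (fun t => Nat.choose t (0 + 1) ≤ a) (a + 0 + 1) with hm
      have e2 : Nat.choose m (0 + 1) = m := Nat.choose_one_right m
      have e3 : Nat.choose (m + 1) (0 + 1) = m + 1 := Nat.choose_one_right (m + 1)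
      have e4 : Nat.choose n (0 + 1) = n := Nat.choose_one_right n
      have hma : m = a := by omega
      have hz : macaulayShift 0 (a - Nat.choose m (0 + 1)) = 0 := rfl
      have hcs : Nat.choose a (0 + 2) < Nat.choose n (0 + 2) :=
        choose_strict 2 a n (by omega) (by omega) (by omega)
      have e5 : Nat.choose m (0 + 2) = Nat.choose a (0 + 2) := by rw [hma]
      omega
  | succ i ih =>
    intro n a hna hn
    rcases Nat.eq_zero_or_pos a with rfl | ha
    · rw [shift_zero]
      exact Nat.choose_pos (by omega)
    · obtain ⟨h1, h2, h3⟩ := mspec (i + 1) a ha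
      rw [shift_succ (i + 1) a ha]
      set m := Nat.findGreatest (fun t => Nat.choose t (i + 1 + 1) ≤ a) (a + (i + 1) + 1) with hm
      have hmn : m < n := by
        by_contra h
        have : Nat.choose n (i + 1 + 1) ≤ Nat.choose m (i + 1 + 1) :=
          Nat.choose_le_choose _ (by omega)
        omega
      have hexp : Nat.choose (m + 1) (i + 1 + 1) = Nat.choose m (i + 1) + Nat.choose m (i + 1 + 1) :=
        Nat.choose_succ_succ m (i + 1)
      have hr : a - Nat.choose m (i + 1 + 1) < Nat.choose m (i + 1) := by omega
      have ihr : macaulayShift (i + 1) (a - Nat.choose m (i + 1 + 1)) < Nat.choose m (i + 2) :=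
        ih m (a - Nat.choose m (i + 1 + 1)) hr (by omega)
      have hsum : Nat.choose (m + 1) (i + 1 + 2) = Nat.choose m (i + 2) + Nat.choose m (i + 1 + 2) :=
        Nat.choose_succ_succ m (i + 2)
      have hle : Nat.choose (m + 1) (i + 1 + 2) ≤ Nat.choose n (i + 1 + 2) :=
        Nat.choose_le_choose _ (by omega)
      omega

lemma shift_mono : ∀ i a b, a ≤ b → macaulayShift i a ≤ macaulayShift i b := by
  intro i
  induction i with
  | zero => intro a b _; simp [macaulayShift]
  | succ i ih =>
    intro a b hab
    rcases Nat.eq_zero_or_pos a with rfl | ha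
    · rw [shift_zero]; omega
    have hb : 0 < b := by omega
    obtain ⟨ha1, ha2, ha3⟩ := mspec i a ha
    obtain ⟨hb1, hb2, hb3⟩ := mspec i b hb
    have eqa := shift_succ i a ha
    have eqb := shift_succ i b hb
    set ma := Nat.findGreatest (fun t => Nat.choose t (i + 1) ≤ a) (a + i + 1) with hma
    set mb := Nat.findGreatest (fun t => Nat.choose t (i + 1) ≤ b) (b + i + 1) with hmb
    have hmamb : ma ≤ mb := by
      rw [hmb]
      refine Nat.le_findGreatest ?_ (le_trans ha2 hab)
      have := Nat.findGreatest_le (P := fun t => Nat.choose t (i + 1) ≤ a) (a + i + 1)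
      rw [← hma] at this
      omega
    rcases Nat.eq_or_lt_of_le hmamb with heq | hlt
    · have hc1 : Nat.choose mb (i + 1) = Nat.choose ma (i + 1) := by rw [heq]
      have hc2 : Nat.choose mb (i + 2) = Nat.choose ma (i + 2) := by rw [heq]
      rw [hc1, hc2] at eqb
      have hih := ih (a - Nat.choose ma (i + 1)) (b - Nat.choose ma (i + 1)) (by omega)
      omega
    · have hbnd : macaulayShift (i + 1) a < Nat.choose (ma + 1) (i + 2) :=
        shift_bound i (ma + 1) a ha3 (by omega)
      have hle : Nat.choose (ma + 1) (i + 2) ≤ Nat.choose mb (i + 2) :=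
        Nat.choose_le_choose _ (by omega)
      omega

/-- **Monotonicity of the shifted Macaulay operator**: if `0 < a ≤ b`, then
`a^{(i)} ≤ b^{(i)}` for every positive integer `i`. -/
theorem macaulayShift_monotone (a b i : ℕ) (ha : 0 < a) (hab : a ≤ b) (hi : 0 < i) :
    macaulayShift i a ≤ macaulayShift i b := by
  exact shift_mono i a b hab
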